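/- arXiv:1512.07874 — 8 statements merged into one kernel-verified Lean document; each statement's English description precedes it below -/
import Mathlib

section
/- Let G and H be graphs with G connected and |G| ≥ σ(H). Then R(G,H) ≥ (|G|−1)(χ(H)−1) + σ(H). -/
/-!
Colour `K_N`, `N = (|G| - 1)(χ(H) - 1) + σ(H) - 1`, by splitting the vertices into `χ(H) - 1`
parts of size `|G| - 1` and one part of size `σ(H) - 1`, with red edges inside the parts and blue
edges between them. A red copy of the connected graph `G` would lie inside a single part, which
is too small; a blue copy of `H` would be properly coloured by the `χ(H)` parts, with a colour
class smaller than `σ(H)`.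

Since `ramsey` is an `sInf`, the lower bound also needs the set of admissible `N` to be nonempty,
which is the finite Ramsey theorem, proved by the Erdős–Szekeres recursion.
-/

open SimpleGraph

/-- Graph `A` contains a copy of graph `B`, i.e. a subgraph isomorphic to `B`. -/
def ContainsCopy {α β : Type*} (A : SimpleGraph α) (B : SimpleGraph β) : Prop :=
  ∃ f : β ↪ α, ∀ x y : β, B.Adj x y → A.Adj (f x) (f y)

/-- The Ramsey number `R(G, H)`: the smallest `N` such that every red-blue coloring of the
edges of `K_N` (identified with its graph of red edges; the blue edges formftered the complement)
contains a red copy of `G` or a blue copy of `H`. -/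
noncomputable def ramsey {α β : Type*} (G : SimpleGraph α) (H : SimpleGraph β) : ℕ :=
  sInf {N : ℕ | ∀ red : SimpleGraph (Fin N), ContainsCopy red G ∨ ContainsCopy redᶜ H}

/-- `σ(H)` relative to `k`: the minimum possible size of a color class over all proper
vertex colorings of `H` with `k` colors. -/
noncomputable def minColorClass {β : Type*} [Fintype β] (H : SimpleGraph β) (k : ℕ) : ℕ :=
  sInf {s : ℕ | ∃ C : H.Coloring (Fin k), ∃ i : Fin k, s = Nat.card {v : β // C v = i}}

lemma containsCopy_iff_isContained {α β : Type*} {A : SimpleGraph α} {B : SimpleGraph β} :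
    ContainsCopy A B ↔ B ⊑ A := by
  rw [isContained_iff_exists_le_comap]
  exact exists_congr fun f => ⟨fun h x y => h x y, fun h x y => @h x y⟩

namespace SimpleGraph

def HasRamseyProperty (m n N : ℕ) : Prop :=
  ∀ (V : Type) [Finite V] (G : SimpleGraph V), N ≤ Nat.card V →
    ¬G.CliqueFree m ∨ ¬Gᶜ.CliqueFree n

lemma HasRamseyProperty.symm {m n N : ℕ} (h : HasRamseyProperty m n N) :
    HasRamseyProperty n m N := fun V _ G hN => by
  simpa only [compl_compl, or_comm] using h V Gᶜ hN

lemma not_cliqueFree_succ_of_induce_neighborSet {V : Type*} {G : SimpleGraph V} {v : V} {m : ℕ}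
    (h : ¬(G.induce (G.neighborSet v)).CliqueFree m) : ¬G.CliqueFree (m + 1) := by
  obtain ⟨t, ht⟩ : ∃ t, (G.induce (G.neighborSet v)).IsNClique m t := by
    simpa [CliqueFree] using h
  classical
  refine fun hG => hG (insert v _) (((isNClique_induce_iff _ _ _).1 ht).insert fun b hb => ?_)
  obtain ⟨⟨b, hvb⟩, -, rfl⟩ := Finset.mem_map.1 hb
  exact hvb

lemma not_cliqueFree_succ_or_of_le_card_neighborSet {V : Type} [Finite V] {G : SimpleGraph V}
    {v : V} {m n N : ℕ} (hN : HasRamseyProperty m (n + 1) N)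
    (hv : N ≤ Nat.card (G.neighborSet v)) :
    ¬G.CliqueFree (m + 1) ∨ ¬Gᶜ.CliqueFree (n + 1) := by
  have hcompl : (G.induce (G.neighborSet v))ᶜ ⊑ Gᶜ :=
    (Embedding.complEquiv (Embedding.induce (G.neighborSet v))).isContained
  refine (hN _ _ hv).imp not_cliqueFree_succ_of_induce_neighborSet fun h hG => h ?_
  exact hG.comap hcompl

lemma card_neighborSet_add_card_neighborSet_compl {V : Type*} [Finite V] (G : SimpleGraph V)
    (v : V) : Nat.card (G.neighborSet v) + Nat.card (Gᶜ.neighborSet v) + 1 = Nat.card V := by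
  rw [Nat.card_coe_set_eq, Nat.card_coe_set_eq,
    ← Set.ncard_union_eq (compl_neighborSet_disjoint G v), neighborSet_union_compl_neighborSet_eq,
    add_comm, ← Set.ncard_singleton v, Set.ncard_add_ncard_compl]

theorem exists_hasRamseyProperty (m n : ℕ) : ∃ N, HasRamseyProperty m n N := by
  induction m generalizing n with
  | zero => exact ⟨0, fun V _ G _ => Or.inl not_cliqueFree_zero⟩
  | succ m ihm =>
    induction n with
    | zero => exact ⟨0, fun V _ G _ => Or.inr not_cliqueFree_zero⟩
    | succ n ihn =>
      obtain ⟨N₁, hN₁⟩ := ihm (n + 1)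
      obtain ⟨N₂, hN₂⟩ := ihn
      refine ⟨N₁ + N₂ + 1, fun V _ G hV => ?_⟩
      obtain ⟨v⟩ : Nonempty V := Nat.card_pos_iff.1 (by omega) |>.1
      have hdeg := card_neighborSet_add_card_neighborSet_compl G v
      rcases le_or_gt N₁ (Nat.card (G.neighborSet v)) with h | h
      · exact not_cliqueFree_succ_or_of_le_card_neighborSet hN₁ h
      · have := not_cliqueFree_succ_or_of_le_card_neighborSet hN₂.symm (G := Gᶜ) (v := v)
          (by omega)
        rwa [compl_compl, or_comm] at this


lemma Preconnected.eq_of_forall_adj {V X : Type*} {G : SimpleGraph V} (hG : G.Preconnected)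
    {f : V → X} (hf : ∀ u v, G.Adj u v → f u = f v) (u v : V) : f u = f v := by
  obtain ⟨w⟩ := hG u v
  induction w with
  | nil => rfl
  | cons h _ ih => exact (hf _ _ h).trans ih

lemma Connected.exists_card_le_of_isContained_compl_completeMultipartiteGraph {α ι : Type*}
    {V : ι → Type*} [∀ i, Finite (V i)] {G : SimpleGraph α} (hG : G.Connected)
    (h : G ⊑ (completeMultipartiteGraph V)ᶜ) : ∃ i, Nat.card α ≤ Nat.card (V i) := by
  obtain ⟨f⟩ := h
  obtain ⟨v₀⟩ := hG.nonempty
  have hpart : ∀ v, (f v).1 = (f v₀).1 := fun v =>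
    hG.preconnected.eq_of_forall_adj (fun _ _ huv => not_ne_iff.1 (f.toHom.map_adj huv).2) v v₀
  refine ⟨(f v₀).1,
    Nat.card_le_card_of_injective (fun v => Equiv.sigmaSubtype _ ⟨f v, hpart v⟩) ?_⟩
  intro u v huv
  exact f.injective (congrArg Subtype.val ((Equiv.sigmaSubtype _).injective huv))

end SimpleGraph

lemma minColorClass_le_of_isContained_completeMultipartiteGraph {β : Type*} [Fintype β]
    {H : SimpleGraph β} {k : ℕ} {V : Fin k → Type*} [∀ i, Finite (V i)]
    (h : H ⊑ completeMultipartiteGraph V) (i : Fin k) : minColorClass H k ≤ Nat.card (V i) := by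
  obtain ⟨f⟩ := h
  let C : H.Coloring (Fin k) := (completeMultipartiteGraph.coloring V).comp f.toHom
  have hC : minColorClass H k ≤ Nat.card {v // C v = i} := Nat.sInf_le ⟨C, i, rfl⟩
  refine hC.trans (Nat.card_le_card_of_injective
    (fun v : {v // C v = i} => Equiv.sigmaSubtype (β := V) i ⟨f v, v.2⟩) ?_)
  intro u v huv
  exact Subtype.ext (f.injective (congrArg Subtype.val ((Equiv.sigmaSubtype i).injective huv)))

lemma minColorClass_zero {β : Type*} [Fintype β] (H : SimpleGraph β) :
    minColorClass H 0 = 0 := by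
  simp [minColorClass]

lemma minColorClass_pos {β : Type*} [Fintype β] {H : SimpleGraph β} {k : ℕ}
    (hk : H.chromaticNumber = k) (hk0 : k ≠ 0) : 0 < minColorClass H k := by
  have hcol : H.Colorable k := chromaticNumber_le_iff_colorable.1 hk.le
  obtain ⟨C, i, hCi⟩ := Nat.sInf_mem (s := {s : ℕ | ∃ C : H.Coloring (Fin k), ∃ i : Fin k,
    s = Nat.card {v : β // C v = i}}) ⟨_, hcol.some, ⟨0, Nat.pos_of_ne_zero hk0⟩, rfl⟩
  obtain ⟨v, hv⟩ := (chromaticNumber_eq_iff_forall_surjective hcol).1 hk C i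
  rw [minColorClass, hCi]
  exact Nat.card_pos_iff.2 ⟨⟨⟨v, hv⟩⟩, inferInstance⟩

lemma ramsey_set_nonempty {α β : Type*} [Fintype α] [Fintype β] (G : SimpleGraph α)
    (H : SimpleGraph β) :
    {N : ℕ | ∀ red : SimpleGraph (Fin N),
      ContainsCopy red G ∨ ContainsCopy redᶜ H}.Nonempty := by
  obtain ⟨N, hN⟩ := exists_hasRamseyProperty (Fintype.card α) (Fintype.card β)
  have hG : G ⊑ completeGraph (Fin (Fintype.card α)) :=
    isContained_top_iff.2 ⟨(Fintype.equivFin α).toEmbedding⟩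
  have hH : H ⊑ completeGraph (Fin (Fintype.card β)) :=
    isContained_top_iff.2 ⟨(Fintype.equivFin β).toEmbedding⟩
  refine ⟨N, fun red => ?_⟩
  simp only [containsCopy_iff_isContained]
  refine (hN _ red (by simp)).imp (fun h => hG.trans ?_) (fun h => hH.trans ?_) <;>
    exact (not_cliqueFree_iff_top_isContained _).1 h

lemma le_ramsey {α β : Type*} [Fintype α] [Fintype β] {G : SimpleGraph α} {H : SimpleGraph β}
    {N : ℕ} (h : ∀ M < N, ∃ red : SimpleGraph (Fin M), ¬G ⊑ red ∧ ¬H ⊑ redᶜ) :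
    N ≤ ramsey G H := by
  refine le_csInf (ramsey_set_nonempty G H) fun M hM => ?_
  by_contra! hMN
  obtain ⟨red, hG, hH⟩ := h M hMN
  simpa [containsCopy_iff_isContained, hG, hH] using hM red

lemma le_ramsey_of_parts {α β : Type*} [Fintype α] [Fintype β] {G : SimpleGraph α}
    {H : SimpleGraph β} (hG : G.Connected) {k : ℕ} (s : Fin k → ℕ)
    (hs : ∀ i, s i < Fintype.card α) (i₀ : Fin k) (hi₀ : s i₀ < minColorClass H k) :
    ∑ i, s i + 1 ≤ ramsey G H := by
  refine le_ramsey fun M hM => ?_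
  let K := completeMultipartiteGraph fun i => Fin (s i)
  obtain ⟨e⟩ : Nonempty (Fin M ↪ Σ i, Fin (s i)) :=
    Function.Embedding.nonempty_of_card_le (by simpa using Nat.le_of_lt_succ hM)
  refine ⟨(K.comap e)ᶜ, fun hred => ?_, fun hblue => ?_⟩
  · obtain ⟨i, hi⟩ := hG.exists_card_le_of_isContained_compl_completeMultipartiteGraph
      (hred.trans (Embedding.complEquiv (Embedding.comap e K)).isContained)
    have := hs i
    simp only [Nat.card_eq_fintype_card, Fintype.card_fin] at hi
    omega
  · have := minColorClass_le_of_isContained_completeMultipartiteGraph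
      ((compl_compl (K.comap e) ▸ hblue).trans (Embedding.comap e K).isContained) i₀
    simp only [Nat.card_eq_fintype_card, Fintype.card_fin] at this
    omega

/-- If `G` is connected and `|G| ≥ σ(H)`, then `R(G,H) ≥ (|G|-1)(χ(H)-1) + σ(H)`. -/
theorem stmt0 {α β : Type*} [Fintype α] [Fintype β]
    (G : SimpleGraph α) (H : SimpleGraph β) (hG : G.Connected)
    (k : ℕ) (hk : H.chromaticNumber = (k : ℕ∞))
    (hσ : minColorClass H k ≤ Fintype.card α) :
    (Fintype.card α - 1) * (k - 1) + minColorClass H k ≤ ramsey G H := by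
  obtain _ | m := k
  · simp [minColorClass_zero]
  have hn : 0 < Fintype.card α := Fintype.card_pos_iff.2 hG.nonempty
  have hσ₀ := minColorClass_pos hk m.succ_ne_zero
  let s : Fin (m + 1) → ℕ :=
    Fin.snoc (fun _ => Fintype.card α - 1) (minColorClass H (m + 1) - 1)
  calc (Fintype.card α - 1) * (m + 1 - 1) + minColorClass H (m + 1) = ∑ i, s i + 1 := by
        simp only [s, Fin.sum_univ_castSucc, Fin.snoc_castSucc, Fin.snoc_last, Finset.sum_const,
          Finset.card_univ, Fintype.card_fin, smul_eq_mul, add_tsub_cancel_right]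
        grind
    _ ≤ ramsey G H := by
        refine le_ramsey_of_parts hG s (fun i => ?_) (Fin.last m)
          (by simp only [s, Fin.snoc_last]; omega)
        induction i using Fin.lastCases <;>
          simp only [s, Fin.snoc_last, Fin.snoc_castSucc] <;> omega
end

section
/- Let k ≥ 2 and m_1 ≤ m_2 ≤ ⋯ ≤ m_k be positive integers with n ≥ 3m_k + 5m_{k−1}. Consider the red-blue edge coloring of the complete graph on (k−1)(n−1) + m_1 − 1 vertices whose red graph is a disjoint union of k−1 cliques of size n−1 together with one clique of size m_1 − 1, all remaining edges being blue. This coloring contains no red cycle of length at least n and no blue copy of K_{m_1,…,m_k}. -/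
open SimpleGraph

/-- The block (clique) containing a vertex of the vertex set `(Fin k × Fin g) ⊕ Fin s`. -/
def blockIndex {k g s : ℕ} : (Fin k × Fin g) ⊕ Fin s → Option (Fin k)
  | Sum.inl p => some p.1
  | Sum.inr _ => none

/-- The disjoint union of `k` cliques of size `g` together with one clique of size `s`:
two distinct vertices are adjacent iff they lie in the same block. -/
def cliquesGraph (k g s : ℕ) : SimpleGraph ((Fin k × Fin g) ⊕ Fin s) :=
  SimpleGraph.fromRel (fun x y => blockIndex x = blockIndex y)

lemma cliquesGraph_adj {k g s : ℕ} {x y : (Fin k × Fin g) ⊕ Fin s} :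
    (cliquesGraph k g s).Adj x y ↔ x ≠ y ∧ blockIndex x = blockIndex y := by
  simp only [cliquesGraph, fromRel_adj]
  constructor
  · rintro ⟨h1, h2 | h2⟩
    · exact ⟨h1, h2⟩
    · exact ⟨h1, h2.symm⟩
  · rintro ⟨h1, h2⟩
    exact ⟨h1, Or.inl h2⟩

/-- Index of a vertex within its block. -/
def vidx {k g s : ℕ} : (Fin k × Fin g) ⊕ Fin s → ℕ
  | Sum.inl p => p.2
  | Sum.inr j => j

lemma vidx_inj {k g s : ℕ} {x y : (Fin k × Fin g) ⊕ Fin s}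
    (hb : blockIndex x = blockIndex y) (hv : vidx x = vidx y) : x = y := by
  cases x with
  | inl p => cases y with
    | inl q =>
      simp only [blockIndex, Option.some.injEq] at hb
      simp only [vidx] at hv
      cases p; cases q; simp_all [Fin.ext_iff]
    | inr j => simp [blockIndex] at hb
  | inr j => cases y with
    | inl q => simp [blockIndex] at hb
    | inr j' => simp only [vidx] at hv; simp [Fin.ext_iff, hv]

lemma walk_block {k g s : ℕ} {v u : (Fin k × Fin g) ⊕ Fin s}
    (w : (cliquesGraph k g s).Walk v u) :
    ∀ x ∈ w.support, blockIndex x = blockIndex v := by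
  induction w with
  | nil => intro x hx; simp at hx; subst hx; rfl
  | cons h p ih =>
    intro x hx
    rw [SimpleGraph.Walk.support_cons] at hx
    rcases List.mem_cons.mp hx with h1 | h2
    · subst h1; rfl
    · rw [ih x h2]; exact (cliquesGraph_adj.mp h).2.symm

lemma m_mono_le (k : ℕ) (m : ℕ → ℕ)
    (hmono : ∀ i, 1 ≤ i → i + 1 ≤ k → m i ≤ m (i + 1)) :
    ∀ a b, 1 ≤ a → a ≤ b → b ≤ k → m a ≤ m b := by
  intro a b ha hab hbk
  induction b with
  | zero => omega
  | succ b ih =>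
    rcases Nat.lt_or_ge a (b + 1) with h | h
    · exact le_trans (ih (by omega) (by omega)) (hmono b (by omega) hbk)
    · have : a = b + 1 := by omega
      subst this; exact le_rfl

/-- For `k ≥ 2` and positive integers `m 1 ≤ ⋯ ≤ m k` with `n ≥ 3 * m k + 5 * m (k-1)`,
the red-blue coloring of the complete graph on `(k-1)(n-1) + m 1 - 1` vertices whose red
graph is the disjoint union of `k-1` cliques of size `n-1` and one clique of size `m 1 - 1`
(all remaining edges blue) contains no red cycle with at least `n` vertices and no blue copy
of `K_{m 1, …, m k}`. -/
theorem stmt4 (k n : ℕ) (hk : 2 ≤ k) (m : ℕ → ℕ)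
    (hpos : ∀ i, 1 ≤ i → i ≤ k → 1 ≤ m i)
    (hmono : ∀ i, 1 ≤ i → i + 1 ≤ k → m i ≤ m (i + 1))
    (hn : 3 * m k + 5 * m (k - 1) ≤ n) :
    (¬ ∃ (v : (Fin (k - 1) × Fin (n - 1)) ⊕ Fin (m 1 - 1))
        (w : (cliquesGraph (k - 1) (n - 1) (m 1 - 1)).Walk v v), w.IsCycle ∧ n ≤ w.length) ∧
    ¬ ContainsCopy (cliquesGraph (k - 1) (n - 1) (m 1 - 1))ᶜ
        (completeMultipartiteGraph fun i : Fin k => Fin (m ((i : ℕ) + 1))) := by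
  have hm1 : 1 ≤ m 1 := hpos 1 le_rfl (by omega)
  have hmk : 1 ≤ m k := hpos k (by omega) le_rfl
  have hm1k : m 1 ≤ m k := m_mono_le k m hmono 1 k le_rfl (by omega) le_rfl
  have hm1n : m 1 ≤ n := by omega
  have hn1 : 1 ≤ n := by omega
  constructor
  · rintro ⟨v, w, hc, hlen⟩
    set l := w.support.tail with hl
    have hnd : l.Nodup := hc.support_nodup
    have hllen : l.length = w.length := by
      have := w.length_support
      simp only [hl, List.length_tail, this]
      omega
    have hmem : ∀ x ∈ l, blockIndex x = blockIndex v := fun x hx =>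
      walk_block w x (List.mem_of_mem_tail hx)
    have hndm : (l.map vidx).Nodup := by
      refine List.Nodup.map_on ?_ hnd
      intro x hx y hy hxy
      exact vidx_inj ((hmem x hx).trans (hmem y hy).symm) hxy
    have hbound : ∀ a ∈ l.map vidx, a < n - 1 := by
      intro a ha
      rcases List.mem_map.mp ha with ⟨x, hx, rfl⟩
      have hb := hmem x hx
      cases x with
      | inl p =>
        have := p.2.isLt
        simp [vidx]
      | inr j =>
        have := j.isLt
        simp only [vidx]
        omega
    have hsub : (l.map vidx).toFinset ⊆ Finset.range (n - 1) := by
      intro a ha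
      rw [List.mem_toFinset] at ha
      exact Finset.mem_range.mpr (hbound a ha)
    have hcard : (l.map vidx).toFinset.card = (l.map vidx).length :=
      List.toFinset_card_of_nodup hndm
    have := Finset.card_le_card hsub
    rw [hcard, List.length_map, hllen, Finset.card_range] at this
    omega
  · rintro ⟨f, hf⟩
    have hmpos : ∀ i : Fin k, 0 < m ((i : ℕ) + 1) := fun i =>
      hpos ((i : ℕ) + 1) (by omega) (by omega)
    have hadj : ∀ x y : (Σ i : Fin k, Fin (m ((i : ℕ) + 1))), x.1 ≠ y.1 →
        blockIndex (f x) ≠ blockIndex (f y) := by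
      intro x y h
      have hxy : (completeMultipartiteGraph fun i : Fin k => Fin (m ((i : ℕ) + 1))).Adj x y := h
      have := hf x y hxy
      rw [compl_adj] at this
      intro hbeq
      exact this.2 (cliquesGraph_adj.mpr ⟨this.1, hbeq⟩)
    set g' : Fin k → Option (Fin (k - 1)) :=
      fun i => blockIndex (f ⟨i, ⟨0, hmpos i⟩⟩) with hg'
    have hginj : Function.Injective g' := by
      intro i j h
      by_contra hne
      exact hadj ⟨i, ⟨0, hmpos i⟩⟩ ⟨j, ⟨0, hmpos j⟩⟩ hne h
    have hgsurj : Function.Surjective g' := by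
      have hbij : Function.Bijective g' :=
        (Fintype.bijective_iff_injective_and_card g').mpr ⟨hginj, by simp; omega⟩
      exact hbij.2
    have hblock : ∀ x : (Σ i : Fin k, Fin (m ((i : ℕ) + 1))),
        blockIndex (f x) = g' x.1 := by
      intro x
      obtain ⟨j, hj⟩ := hgsurj (blockIndex (f x))
      by_cases hjx : j = x.1
      · rw [← hjx]; exact hj.symm
      · exact absurd hj.symm
          (hadj x ⟨j, ⟨0, hmpos j⟩⟩ (fun h => hjx h.symm))
    obtain ⟨i₀, hi₀⟩ := hgsurj none
    have hinr : ∀ t : Fin (m ((i₀ : ℕ) + 1)), ∃ j : Fin (m 1 - 1),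
        f ⟨i₀, t⟩ = Sum.inr j := by
      intro t
      have hb := hblock ⟨i₀, t⟩
      rw [show (⟨i₀, t⟩ : Σ i : Fin k, Fin (m ((i : ℕ) + 1))).1 = i₀ from rfl, hi₀] at hb
      cases hfx : f ⟨i₀, t⟩ with
      | inl p => rw [hfx] at hb; simp [blockIndex] at hb
      | inr j => exact ⟨j, rfl⟩
    have hinj : Function.Injective (fun t : Fin (m ((i₀ : ℕ) + 1)) => (hinr t).choose) := by
      intro t t' h
      have h1 := (hinr t).choose_spec
      have h2 := (hinr t').choose_spec
      simp only at h
      rw [h] at h1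
      have : f ⟨i₀, t⟩ = f ⟨i₀, t'⟩ := h1.trans h2.symm
      have := f.injective this
      simpa using this
    have hcard := Fintype.card_le_of_injective _ hinj
    simp only [Fintype.card_fin] at hcard
    have : m 1 ≤ m ((i₀ : ℕ) + 1) :=
      m_mono_le k m hmono 1 ((i₀ : ℕ) + 1) le_rfl (by omega) (by omega)
    omega
end

section
/- Let P be a path of maximum length in a graph G starting at a vertex p_0, let X be a connected set of ending vertices for P, and let S be the set of all ending vertices for P. Then |N_G(X)| ≤ 2|S|. -/
open SimpleGraph

/-- `Q` is a rotation of `P`: if `P = p₀ … x … p_t` (with endpoint `b = p_t`) and `x b` is an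
edge, the rotation is `p₀ … x b p_{t-1} … `, obtained by reversing the segment after `x` and
appending it after the new edge `x b`.  This is captured by the relation between the vertex
sequences (supports) of the two walks. -/
def IsRotation {V : Type*} {G : SimpleGraph V} {a b c : V}
    (P : G.Walk a b) (Q : G.Walk a c) : Prop :=
  ∃ (l1 l2 : List V) (x : V),
    P.support = l1 ++ x :: (l2 ++ [b]) ∧ Q.support = l1 ++ x :: b :: l2.reverse

/-- `Q` is derived from `P`: obtained from `P` by a finite sequence of rotations. -/
def IsDerived {V : Type*} {G : SimpleGraph V} {a b c : V}
    (P : G.Walk a b) (Q : G.Walk a c) : Prop :=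
  Relation.ReflTransGen (fun R S : (Σ v : V, G.Walk a v) => IsRotation R.2 S.2) ⟨b, P⟩ ⟨c, Q⟩

/-- `x` is an ending vertex for `P`: some path derived from `P` ends at `x`. -/
def IsEndingVertex {V : Type*} {G : SimpleGraph V} {a b : V}
    (P : G.Walk a b) (x : V) : Prop :=
  ∃ Q : G.Walk a x, IsDerived P Q

/-- `X` is a connected set of ending vertices for `P`: for every `x ∈ X` there is a walk
ending at `x` derived from `P` by a sequence of rotations all of whose intermediate
walks end at vertices of `X`. -/
def IsConnectedEndingSet {V : Type*} {G : SimpleGraph V} {a b : V}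
    (P : G.Walk a b) (X : Set V) : Prop :=
  ∀ x ∈ X, ∃ Q : G.Walk a x,
    Relation.ReflTransGen
      (fun R S : (Σ v : V, G.Walk a v) => IsRotation R.2 S.2 ∧ S.1 ∈ X) ⟨b, P⟩ ⟨x, Q⟩

/-- `N_G(S)`: the set of vertices outside `S` having a neighbour in `S`. -/
def setNbhd {V : Type*} (G : SimpleGraph V) (S : Set V) : Set V :=
  {v | v ∉ S ∧ ∃ s ∈ S, G.Adj v s}

/-!
Let `u ∈ N(X)` with `u ≠ b`, adjacent to `x ∈ X`, and let `Q` be a path ending at `x` reached by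
rotations all ending in `X`. If `u` has a neighbour in `X` along `P` we are done. Otherwise the
edges of `P` at `u` survive into `Q`, as a rotation destroys only the edge at its new endpoint. By
maximality `u` lies on `Q`, and the rotation of `Q` at the edge `ux` ends at the successor `w` of
`u` on `Q`, an ending vertex. Both paths start at `p₀` and neither ends at `u`, so `u` has as many
neighbours along `Q` as along `P`, and `w` is a neighbour of `u` along `P`. Thus every vertex of
`N(X) \ {b}` is a neighbour along `P` of an ending vertex; each vertex has at most two neighbours
along `P`, and `b` at most one, whence `|N(X)| ≤ 2|S|`.
-/

namespace SimpleGraph.Walk.IsPath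

variable {V : Type*} {G : SimpleGraph V} {a b u : V} {p : G.Walk a b}

theorem ncard_neighborSet_toSubgraph_end_le_one (hp : p.IsPath) :
    (p.toSubgraph.neighborSet b).ncard ≤ 1 :=
  (Set.ncard_le_one_iff p.finite_neighborSet_toSubgraph).mpr fun hv hw =>
    (hp.reverse.snd_of_toSubgraph_adj (by simpa using hv)).symm.trans
      (hp.reverse.snd_of_toSubgraph_adj (by simpa using hw))

theorem ncard_neighborSet_toSubgraph_of_ne_end [DecidableEq V] (hp : p.IsPath)
    (hu : u ∈ p.support) (hub : u ≠ b) :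
    (p.toSubgraph.neighborSet u).ncard = if u = a then 1 else 2 := by
  have hnil : ¬ p.Nil := fun h =>
    hub ((List.mem_singleton.mp (nil_iff_support_eq.mp h ▸ hu)).trans h.eq)
  split_ifs with hua
  · subst hua
    simp [hp.neighborSet_toSubgraph_startpoint hnil]
  · obtain ⟨i, rfl, hi⟩ := p.mem_support_iff_exists_getVert.mp hu
    have hi0 : i ≠ 0 := by rintro rfl; exact hua p.getVert_zero
    have hil : i < p.length := lt_of_le_of_ne hi (by rintro rfl; exact hub p.getVert_length)
    exact hp.ncard_neighborSet_toSubgraph_internal_eq_two hi0 hil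

theorem ncard_neighborSet_toSubgraph_le_two (hp : p.IsPath) (u : V) :
    (p.toSubgraph.neighborSet u).ncard ≤ 2 := by
  classical
  by_cases hu : u ∈ p.support
  · by_cases hub : u = b
    · subst hub
      exact hp.ncard_neighborSet_toSubgraph_end_le_one.trans one_le_two
    · rw [hp.ncard_neighborSet_toSubgraph_of_ne_end hu hub]
      split_ifs <;> norm_num
  · have : p.toSubgraph.neighborSet u = ∅ :=
      Set.eq_empty_of_forall_notMem fun _ hv => hu (mem_support_of_adj_toSubgraph hv)
    simp [this]

theorem mem_support_of_adj_of_forall_length_le (hp : p.IsPath)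
    (hmax : ∀ c (q : G.Walk a c), q.IsPath → q.length ≤ p.length) (hadj : G.Adj b u) :
    u ∈ p.support := by
  by_contra hu
  simpa using hmax _ _ (hp.concat hu hadj)

theorem ncard_le_two_mul_card_of_forall_adj (hp : p.IsPath) {A : Set V} {S : Finset V}
    (hbS : b ∈ S) (hA : ∀ u ∈ A, u ≠ b → ∃ w ∈ S, p.toSubgraph.Adj u w) :
    A.ncard ≤ 2 * S.card := by
  classical
  set N := p.toSubgraph.neighborSet
  have hsub : A ⊆ insert b (N b) ∪ ⋃ s ∈ S.erase b, N s := by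
    intro u hu
    by_cases hub : u = b
    · exact Or.inl (Or.inl hub)
    obtain ⟨w, hwS, hw⟩ := hA u hu hub
    by_cases hwb : w = b
    · exact Or.inl (Or.inr (hwb ▸ hw.symm))
    · exact Or.inr (Set.mem_biUnion (Finset.mem_erase.mpr ⟨hwb, hwS⟩) hw.symm)
  have hfin : (insert b (N b) ∪ ⋃ s ∈ S.erase b, N s).Finite :=
    ((p.finite_neighborSet_toSubgraph).insert b).union
      ((S.erase b).finite_toSet.biUnion fun _ _ => p.finite_neighborSet_toSubgraph)
  have hS : 1 ≤ S.card := Finset.card_pos.mpr ⟨b, hbS⟩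
  calc A.ncard
    _ ≤ (insert b (N b) ∪ ⋃ s ∈ S.erase b, N s).ncard := Set.ncard_le_ncard hsub hfin
    _ ≤ (insert b (N b)).ncard + (⋃ s ∈ S.erase b, N s).ncard := Set.ncard_union_le _ _
    _ ≤ (N b).ncard + 1 + ∑ s ∈ S.erase b, (N s).ncard :=
      add_le_add (Set.ncard_insert_le _ _) (Finset.set_ncard_biUnion_le _ _)
    _ ≤ 1 + 1 + ∑ s ∈ S.erase b, 2 := by
      gcongr with s
      · exact hp.ncard_neighborSet_toSubgraph_end_le_one
      · exact hp.ncard_neighborSet_toSubgraph_le_two s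
    _ = 2 * S.card := by
      rw [Finset.sum_const, Finset.card_erase_of_mem hbS, smul_eq_mul]
      omega

end SimpleGraph.Walk.IsPath

open Relation

section Rotation

variable {V : Type*} {G : SimpleGraph V} {a b c : V} {P : G.Walk a b} {Q : G.Walk a c}

theorem IsRotation.exists_support_eq (h : IsRotation P Q) :
    ∃ A B : List V, P.support = A ++ B ∧ Q.support = A ++ B.reverse :=
  let ⟨l1, l2, x, hP, hQ⟩ := h
  ⟨l1 ++ [x], l2 ++ [b], by simp [hP], by simp [hQ]⟩

theorem IsRotation.support_perm (h : IsRotation P Q) : Q.support.Perm P.support := by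
  obtain ⟨A, B, hP, hQ⟩ := h.exists_support_eq
  rw [hP, hQ]
  exact (List.reverse_perm B).append_left A

theorem IsRotation.mem_edges_or_end_mem (h : IsRotation P Q) {e : Sym2 V} (he : e ∈ P.edges) :
    e ∈ Q.edges ∨ c ∈ e := by
  obtain ⟨A, B, hP, hQ⟩ := h.exists_support_eq
  have key : ∀ y z, [y, z] <:+: A ++ B → s(y, z) ∈ Q.edges ∨ c ∈ s(y, z) := by
    intro y z hyz
    rw [← Walk.infix_support_iff_mem_edges, hQ]
    rcases List.infix_append_iff_ne_nil.mp hyz with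
      hA | hB | ⟨l₁, l₂, h₁, h₂, hl, -, hpre⟩
    · exact Or.inl (Or.inl (List.infix_append_of_infix_left hA))
    · exact Or.inl (Or.inr (List.infix_append_of_infix_right (List.reverse_infix.mpr hB)))
    · obtain rfl : l₂ = [z] := by
        rcases l₁ with _ | ⟨_, _ | ⟨_, _⟩⟩ <;> simp_all
      obtain ⟨t, rfl⟩ := hpre
      have hc := Q.getLast_support
      simp only [hQ, List.singleton_append, List.reverse_cons, ← List.append_assoc] at hc
      exact Or.inr (by simp [← hc])
  induction e using Sym2.ind with
  | _ y z =>
    rcases Walk.infix_support_iff_mem_edges.mpr he with hyz | hzy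
    · exact key y z (hP ▸ hyz)
    · simpa [Sym2.eq_swap] using key z y (hP ▸ hzy)

theorem IsDerived.support_perm (h : IsDerived P Q) : Q.support.Perm P.support := by
  suffices ∀ R, ReflTransGen (fun R S : (Σ v, G.Walk a v) => IsRotation R.2 S.2) ⟨b, P⟩ R →
      R.2.support.Perm P.support from this _ h
  intro R hR
  induction hR with
  | refl => rfl
  | tail _ hrot ih => exact hrot.support_perm.trans ih

theorem IsDerived.isPath (h : IsDerived P Q) (hP : P.IsPath) : Q.IsPath := by
  rw [Walk.isPath_def] at hP ⊢
  exact h.support_perm.nodup_iff.mpr hP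

theorem IsDerived.length_eq (h : IsDerived P Q) : Q.length = P.length := by
  simpa using h.support_perm.length_eq

theorem mem_edges_of_rotations_within {X : Set V}
    (h : ReflTransGen (fun R S : (Σ v, G.Walk a v) => IsRotation R.2 S.2 ∧ S.1 ∈ X)
      ⟨b, P⟩ ⟨c, Q⟩) {e : Sym2 V} (he : e ∈ P.edges) (heX : ∀ v ∈ e, v ∉ X) :
    e ∈ Q.edges := by
  suffices ∀ R, ReflTransGen (fun R S : (Σ v, G.Walk a v) => IsRotation R.2 S.2 ∧ S.1 ∈ X)
      ⟨b, P⟩ R → e ∈ R.2.edges from this _ h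
  intro R hR
  induction hR with
  | refl => exact he
  | tail _ hrot ih =>
    exact (hrot.1.mem_edges_or_end_mem ih).resolve_right fun hmem => heX _ hmem hrot.2

theorem IsDerived.of_rotations_within {X : Set V}
    (h : ReflTransGen (fun R S : (Σ v, G.Walk a v) => IsRotation R.2 S.2 ∧ S.1 ∈ X)
      ⟨b, P⟩ ⟨c, Q⟩) : IsDerived P Q :=
  ReflTransGen.mono (fun _ _ h => h.1) _ _ h

theorem isRotation_append_cons {u w : V} (A : G.Walk a u) (h : G.Adj u w) (B : G.Walk w c)
    (h' : G.Adj u c) : IsRotation (A.append (.cons h B)) (A.append (.cons h' B.reverse)) :=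
  ⟨A.support.dropLast, B.support.dropLast, u,
    by simp [Walk.support_append_eq_support_dropLast_append, Walk.dropLast_support_concat],
    by
      rw [Walk.support_append_eq_support_dropLast_append, Walk.support_cons, Walk.support_reverse,
        ← B.dropLast_support_concat]
      simp⟩

theorem exists_isRotation_of_adj_end {u : V} (hu : u ∈ Q.support) (huc : u ≠ c)
    (hadj : G.Adj u c) : ∃ w, ∃ Q' : G.Walk a w, IsRotation Q Q' ∧ Q.toSubgraph.Adj u w := by
  classical
  obtain ⟨w, h, B, hB⟩ := Walk.exists_eq_cons_of_ne huc (Q.dropUntil u hu)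
  refine ⟨w, (Q.takeUntil u hu).append (.cons hadj B.reverse), ?_, ?_⟩
  · simpa [← hB] using isRotation_append_cons (Q.takeUntil u hu) h B hadj
  · rw [← Q.take_spec hu, hB]
    simp

end Rotation

section Posa

variable {V : Type*} {G : SimpleGraph V} {a b : V} {P : G.Walk a b} {X : Set V}

theorem IsConnectedEndingSet.isEndingVertex (hX : IsConnectedEndingSet P X) {x : V}
    (hx : x ∈ X) : IsEndingVertex P x :=
  let ⟨Q, hQ⟩ := hX x hx
  ⟨Q, IsDerived.of_rotations_within hQ⟩

theorem IsConnectedEndingSet.exists_isEndingVertex_adj (hX : IsConnectedEndingSet P X)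
    (hP : P.IsPath) (hmax : ∀ v (R : G.Walk a v), R.IsPath → R.length ≤ P.length) {u : V}
    (hu : u ∈ setNbhd G X) (hub : u ≠ b) :
    ∃ w, IsEndingVertex P w ∧ P.toSubgraph.Adj u w := by
  classical
  obtain ⟨huX, x, hxX, hux⟩ := hu
  by_cases hPX : ∃ v ∈ X, P.toSubgraph.Adj u v
  · obtain ⟨v, hvX, hv⟩ := hPX
    exact ⟨v, hX.isEndingVertex hvX, hv⟩
  push Not at hPX
  obtain ⟨Q, hchain⟩ := hX x hxX
  have hder := IsDerived.of_rotations_within hchain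
  have hQ := hder.isPath hP
  have huQ : u ∈ Q.support := hQ.mem_support_of_adj_of_forall_length_le
    (fun v R hR => hder.length_eq ▸ hmax v R hR) hux.symm
  have hxu : u ≠ x := fun h => huX (h ▸ hxX)
  obtain ⟨w, Q', hrot, hw⟩ := exists_isRotation_of_adj_end huQ hxu hux
  refine ⟨w, ⟨Q', hder.tail hrot⟩, ?_⟩
  have hsub : P.toSubgraph.neighborSet u ⊆ Q.toSubgraph.neighborSet u := by
    intro v hv
    rw [Subgraph.mem_neighborSet, Walk.adj_toSubgraph_iff_mem_edges] at hv ⊢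
    refine mem_edges_of_rotations_within hchain hv fun t ht htX => ?_
    rcases Sym2.mem_iff.mp ht with rfl | rfl
    · exact huX htX
    · exact hPX t htX (Walk.adj_toSubgraph_iff_mem_edges.mpr hv)
  have hcard : (Q.toSubgraph.neighborSet u).ncard ≤ (P.toSubgraph.neighborSet u).ncard := by
    rw [hQ.ncard_neighborSet_toSubgraph_of_ne_end huQ hxu,
      hP.ncard_neighborSet_toSubgraph_of_ne_end (hder.support_perm.subset huQ) hub]
  show w ∈ P.toSubgraph.neighborSet u
  rwa [Set.eq_of_subset_of_ncard_le hsub hcard Q.finite_neighborSet_toSubgraph]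

end Posa

/-- Pósa's lemma, part (i): if `P` is a path of maximum length in `G` starting at `p₀`,
`X` is a connected set of ending vertices for `P`, and `S` is the set of all ending
vertices for `P`, then `|N_G(X)| ≤ 2|S|`. -/
theorem stmt8 {V : Type*} [Fintype V] {G : SimpleGraph V} {p₀ b : V}
    (P : G.Walk p₀ b) (hP : P.IsPath)
    (hmax : ∀ (u v : V) (Q : G.Walk u v), Q.IsPath → Q.length ≤ P.length)
    (X : Set V) (hX : IsConnectedEndingSet P X) :
    (setNbhd G X).ncard ≤ 2 * {x : V | IsEndingVertex P x}.ncard := by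
  classical
  rw [Set.ncard_eq_toFinset_card' {x | IsEndingVertex P x}]
  have hb : b ∈ {x | IsEndingVertex P x}.toFinset := by simpa using ⟨P, .refl⟩
  refine hP.ncard_le_two_mul_card_of_forall_adj hb fun u hu hub => ?_
  obtain ⟨w, hw, hadj⟩ :=
    hX.exists_isEndingVertex_adj hP (fun v R hR => hmax p₀ v R hR) hu hub
  exact ⟨w, by simpa using hw, hadj⟩
end

section
/- Let P be a path of maximum length in a graph G starting at a vertex p_0, and let x be an ending vertex for P. Then every neighbor of x in G lies on P, i.e., N_G(x) ⊆ V(P). -/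
open SimpleGraph

private lemma rotation_perm {V : Type*} {G : SimpleGraph V} {a b c : V}
    {P : G.Walk a b} {Q : G.Walk a c} (h : IsRotation P Q) :
    Q.support.Perm P.support := by
  obtain ⟨l1, l2, x, hP, hQ⟩ := h
  rw [hP, hQ]
  refine List.Perm.append_left _ (List.Perm.cons _ ?_)
  exact ((List.reverse_perm l2).cons b).trans (List.perm_append_singleton b l2).symm

private lemma derived_perm_aux {V : Type*} {G : SimpleGraph V} {a b : V}
    {P : G.Walk a b} (S : Σ v : V, G.Walk a v)
    (h : Relation.ReflTransGen
      (fun R S : (Σ v : V, G.Walk a v) => IsRotation R.2 S.2) ⟨b, P⟩ S) :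
    S.2.support.Perm P.support := by
  induction h with
  | refl => exact List.Perm.refl _
  | tail _ hrot ih => exact (rotation_perm hrot).trans ih

private lemma derived_perm {V : Type*} {G : SimpleGraph V} {a b c : V}
    {P : G.Walk a b} {Q : G.Walk a c} (h : IsDerived P Q) :
    Q.support.Perm P.support :=
  derived_perm_aux ⟨c, Q⟩ h

/-- If `P` is a path of maximum length in `G` starting at `p₀` and `x` is an ending vertex
for `P`, then every neighbour of `x` lies on `P`. -/
theorem stmt10 {V : Type*} [Fintype V] {G : SimpleGraph V} {p₀ b : V}
    (P : G.Walk p₀ b) (hP : P.IsPath)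
    (hmax : ∀ (u v : V) (Q : G.Walk u v), Q.IsPath → Q.length ≤ P.length)
    (x : V) (hx : IsEndingVertex P x) :
    G.neighborSet x ⊆ {v : V | v ∈ P.support} := by
  obtain ⟨Q, hQ⟩ := hx
  have hperm := derived_perm hQ
  have hQpath : Q.IsPath := by
    rw [Walk.isPath_def] at hP ⊢
    exact hperm.nodup_iff.mpr hP
  have hlen : Q.length = P.length := by
    have := hperm.length_eq
    simpa [Walk.length_support] using this
  intro y hy
  by_contra hyP
  have hyQ : y ∉ Q.support := fun h => hyP (hperm.mem_iff.mp h)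
  have hcpath : (Walk.cons hy.symm Q.reverse).IsPath := by
    rw [Walk.cons_isPath_iff]
    exact ⟨hQpath.reverse, by simpa using hyQ⟩
  have := hmax _ _ _ hcpath
  simp [Walk.length_cons, hlen] at this
end

section
/- For any path P in a graph G, the set S of all ending vertices for P is a connected set of ending vertices; moreover, for every integer t with 1 ≤ t ≤ |S| there exists a connected set of ending vertices for P of size exactly t. -/
open SimpleGraph

/-!
Every rotation sequence starting from `P` passes only through ending vertices, which gives
the first claim. For the second, grow connected sets `{b} = X₁ ⊂ X₂ ⊂ ⋯` of ending vertices
one vertex at a time: if `Xₜ` misses some ending vertex `y`, follow a rotation sequence from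
`P` to `y` and stop at the first path whose endpoint `z` lies outside `Xₜ`; every earlier
endpoint lies in `Xₜ`, so `Xₜ ∪ {z}` is again connected.
-/

namespace SimpleGraph.Walk

variable {V : Type*} {G : SimpleGraph V} {a b : V}

abbrev RotationStep (R S : Σ v : V, G.Walk a v) : Prop :=
  IsRotation R.2 S.2

abbrev RotationStepIn (X : Set V) (R S : Σ v : V, G.Walk a v) : Prop :=
  IsRotation R.2 S.2 ∧ S.1 ∈ X

lemma isEndingVertex_of_reflTransGen {P : G.Walk a b} {s : Σ v : V, G.Walk a v}
    (h : Relation.ReflTransGen RotationStep ⟨b, P⟩ s) : IsEndingVertex P s.1 :=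
  ⟨s.2, h⟩

lemma reflTransGen_rotationStepIn_mono {X Y : Set V} (hXY : X ⊆ Y)
    {s t : Σ v : V, G.Walk a v} (h : Relation.ReflTransGen (RotationStepIn X) s t) :
    Relation.ReflTransGen (RotationStepIn Y) s t :=
  Relation.ReflTransGen.mono (fun _ _ hst => ⟨hst.1, hXY hst.2⟩) _ _ h

lemma isConnectedEndingSet_setOf_isEndingVertex (P : G.Walk a b) :
    IsConnectedEndingSet P {x | IsEndingVertex P x} := by
  have hlift : ∀ s, Relation.ReflTransGen RotationStep ⟨b, P⟩ s →
      Relation.ReflTransGen (RotationStepIn {x | IsEndingVertex P x}) ⟨b, P⟩ s := by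
    intro s h
    induction h with
    | refl => exact .refl
    | tail hpre hstep ih =>
      exact ih.tail ⟨hstep, isEndingVertex_of_reflTransGen (hpre.tail hstep)⟩
  rintro x ⟨Q, hQ⟩
  exact ⟨Q, hlift _ hQ⟩

lemma reflTransGen_rotationStep_stays_or_exits {P : G.Walk a b} {X : Set V} (hb : b ∈ X)
    {s : Σ v : V, G.Walk a v} (h : Relation.ReflTransGen RotationStep ⟨b, P⟩ s) :
    (s.1 ∈ X ∧ Relation.ReflTransGen (RotationStepIn X) ⟨b, P⟩ s) ∨
      ∃ z ∉ X, ∃ Qz : G.Walk a z, IsDerived P Qz ∧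
        Relation.ReflTransGen (RotationStepIn (insert z X)) ⟨b, P⟩ ⟨z, Qz⟩ := by
  induction h with
  | refl => exact .inl ⟨hb, .refl⟩
  | @tail _ s hpre hstep ih =>
    rcases ih with ⟨-, hchain⟩ | hexit
    · by_cases hs : s.1 ∈ X
      · exact .inl ⟨hs, hchain.tail ⟨hstep, hs⟩⟩
      · refine .inr ⟨s.1, hs, s.2, ?_, ?_⟩
        · exact hpre.tail hstep
        · exact (reflTransGen_rotationStepIn_mono (Set.subset_insert _ _) hchain).tail
            ⟨hstep, Set.mem_insert _ _⟩
    · exact .inr hexit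

lemma exists_isConnectedEndingSet_insert {P : G.Walk a b} {X : Set V}
    (hX : IsConnectedEndingSet P X) (hb : b ∈ X) {y : V} (hy : IsEndingVertex P y)
    (hyX : y ∉ X) :
    ∃ z ∉ X, IsEndingVertex P z ∧ IsConnectedEndingSet P (insert z X) := by
  obtain ⟨Qy, hQy⟩ := hy
  rcases reflTransGen_rotationStep_stays_or_exits hb hQy with
    ⟨hyX', -⟩ | ⟨z, hzX, Qz, hQz, hchain⟩
  · exact absurd hyX' hyX
  refine ⟨z, hzX, ⟨Qz, hQz⟩, ?_⟩
  rintro x (rfl | hx)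
  · exact ⟨Qz, hchain⟩
  · obtain ⟨Q, hQ⟩ := hX x hx
    exact ⟨Q, reflTransGen_rotationStepIn_mono (Set.subset_insert _ _) hQ⟩

lemma exists_isConnectedEndingSet_ncard_eq (P : G.Walk a b) {t : ℕ} (ht : 1 ≤ t)
    (htS : t ≤ {x | IsEndingVertex P x}.ncard) :
    ∃ X ⊆ {x | IsEndingVertex P x}, b ∈ X ∧ IsConnectedEndingSet P X ∧ X.ncard = t := by
  induction t, ht using Nat.le_induction with
  | base =>
    refine ⟨{b}, ?_, rfl, ?_, Set.ncard_singleton b⟩ <;>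
    · rintro x rfl
      exact ⟨P, .refl⟩
  | succ t ht ih =>
    obtain ⟨X, hXS, hbX, hX, hcard⟩ := ih (Nat.le_of_succ_le htS)
    obtain ⟨y, hy, hyX⟩ : ∃ y ∈ {x | IsEndingVertex P x}, y ∉ X :=
      Set.not_subset.mp fun hSX => by
        have := Set.ncard_le_ncard hSX (Set.finite_of_ncard_pos (by omega))
        omega
    obtain ⟨z, hzX, hz, hzX'⟩ := exists_isConnectedEndingSet_insert hX hbX hy hyX
    refine ⟨insert z X, Set.insert_subset hz hXS, Set.mem_insert_of_mem _ hbX, hzX', ?_⟩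
    rw [Set.ncard_insert_of_notMem hzX (Set.finite_of_ncard_pos (by omega)), hcard]

end SimpleGraph.Walk

theorem stmt12_general {V : Type*} {G : SimpleGraph V} {p₀ b : V}
    (P : G.Walk p₀ b) :
    IsConnectedEndingSet P {x : V | IsEndingVertex P x} ∧
    ∀ t : ℕ, 1 ≤ t → t ≤ {x : V | IsEndingVertex P x}.ncard →
      ∃ X : Set V, IsConnectedEndingSet P X ∧ X.ncard = t := by
  refine ⟨P.isConnectedEndingSet_setOf_isEndingVertex, fun t ht htS => ?_⟩
  obtain ⟨X, -, -, hX, hcard⟩ := P.exists_isConnectedEndingSet_ncard_eq ht htS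
  exact ⟨X, hX, hcard⟩

/-- For any path `P` in a graph `G`, the set `S` of all ending vertices for `P` is a
connected set of ending vertices; moreover for every `t` with `1 ≤ t ≤ |S|` there is a
connected set of ending vertices for `P` of size exactly `t`. -/
theorem stmt12 {V : Type*} [Fintype V] {G : SimpleGraph V} {p₀ b : V}
    (P : G.Walk p₀ b) (hP : P.IsPath) :
    IsConnectedEndingSet P {x : V | IsEndingVertex P x} ∧
    ∀ t : ℕ, 1 ≤ t → t ≤ {x : V | IsEndingVertex P x}.ncard →
      ∃ X : Set V, IsConnectedEndingSet P X ∧ X.ncard = t :=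
  stmt12_general P
end

section
/- Let m ≥ 1 be an integer and let G be a graph in which every vertex set B with |B| ≥ m satisfies |N_G(B) ∪ B| ≥ 6m. Then there exists a set A of vertices with |A| < m such that in the induced subgraph G' = G − A, every nonempty vertex set X with |X| ≤ m satisfies |N_{G'}(X)| > 2|X|. -/
open SimpleGraph

/-!
Suppose no such `A` exists. Starting from `A = ∅`, repeatedly add to `A` a nonempty set `X`
of at most `m` vertices outside `A` with `|N_{G-A}(X)| ≤ 2|X|`. Every step raises
`|N_G(A) ∪ A|` by at most `|X| + 2|X|`, so `|N_G(A) ∪ A| ≤ 3|A|` throughout. The first time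
`|A| ≥ m` we still have `|A| < 2m`, hence `|N_G(A) ∪ A| < 6m`, contradicting the hypothesis.
-/

namespace SetNbhd

variable {V : Type*} (G : SimpleGraph V)

lemma setOf_adj_diff_eq (A X : Set V) :
    {v : V | v ∉ A ∧ v ∉ X ∧ ∃ x ∈ X, G.Adj v x} = setNbhd G X \ A := by
  ext v
  simp only [setNbhd, Set.mem_ofPred_eq, Set.mem_sdiff]
  tauto

lemma union_union_subset (A X : Set V) :
    setNbhd G (A ∪ X) ∪ (A ∪ X) ⊆ (setNbhd G A ∪ A) ∪ X ∪ (setNbhd G X \ A) := by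
  rintro v (⟨hv, s, hs | hs, hadj⟩ | hv | hv)
  · exact Or.inl (Or.inl (Or.inl ⟨fun h => hv (Or.inl h), s, hs, hadj⟩))
  · exact Or.inr ⟨⟨fun h => hv (Or.inr h), s, hs, hadj⟩, fun h => hv (Or.inl h)⟩
  · exact Or.inl (Or.inl (Or.inr hv))
  · exact Or.inl (Or.inr hv)

lemma ncard_union_union_le [Finite V] (A X : Set V) :
    (setNbhd G (A ∪ X) ∪ (A ∪ X)).ncard ≤
      (setNbhd G A ∪ A).ncard + X.ncard + (setNbhd G X \ A).ncard :=
  calc (setNbhd G (A ∪ X) ∪ (A ∪ X)).ncard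
      ≤ ((setNbhd G A ∪ A) ∪ X ∪ (setNbhd G X \ A)).ncard :=
        Set.ncard_le_ncard (union_union_subset G A X)
    _ ≤ ((setNbhd G A ∪ A) ∪ X).ncard + (setNbhd G X \ A).ncard := Set.ncard_union_le _ _
    _ ≤ (setNbhd G A ∪ A).ncard + X.ncard + (setNbhd G X \ A).ncard := by
        gcongr; exact Set.ncard_union_le _ _

theorem exists_ncard_union_le_three_mul [Finite V] {m : ℕ}
    (hgrow : ∀ A : Set V, A.ncard < m → ∃ X : Set V, X.Nonempty ∧ X ⊆ Aᶜ ∧ X.ncard ≤ m ∧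
      (setNbhd G X \ A).ncard ≤ 2 * X.ncard)
    (A : Set V) (hA : A.ncard < m) (hA3 : (setNbhd G A ∪ A).ncard ≤ 3 * A.ncard) :
    ∃ B : Set V, m ≤ B.ncard ∧ B.ncard < 2 * m ∧ (setNbhd G B ∪ B).ncard ≤ 3 * B.ncard := by
  obtain ⟨X, hXne, hXA, hXm, hX2⟩ := hgrow A hA
  have hcard : (A ∪ X).ncard = A.ncard + X.ncard :=
    Set.ncard_union_eq (Set.disjoint_right.mpr hXA)
  have hXpos : 0 < X.ncard := (Set.ncard_pos).mpr hXne
  have hAX3 : (setNbhd G (A ∪ X) ∪ (A ∪ X)).ncard ≤ 3 * (A ∪ X).ncard := by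
    have := ncard_union_union_le G A X
    omega
  by_cases hAXm : (A ∪ X).ncard < m
  · exact exists_ncard_union_le_three_mul hgrow (A ∪ X) hAXm hAX3
  · exact ⟨A ∪ X, by omega, by omega, hAX3⟩
termination_by m - A.ncard
decreasing_by omega

end SetNbhd

/-- If every vertex set `B` with `|B| ≥ m` satisfies `|N_G(B) ∪ B| ≥ 6m`, then there is a
set `A` with `|A| < m` such that in `G' = G - A` every nonempty set `X` with `|X| ≤ m`
satisfies `|N_{G'}(X)| > 2|X|`. -/
theorem stmt14 {V : Type*} [Fintype V] (m : ℕ) (hm : 1 ≤ m) (G : SimpleGraph V)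
    (hexp : ∀ B : Set V, m ≤ B.ncard → 6 * m ≤ (setNbhd G B ∪ B).ncard) :
    ∃ A : Set V, A.ncard < m ∧
      ∀ X : Set V, X.Nonempty → X ⊆ Aᶜ → X.ncard ≤ m →
        2 * X.ncard < {v : V | v ∉ A ∧ v ∉ X ∧ ∃ x ∈ X, G.Adj v x}.ncard := by
  by_contra! hcon
  have hgrow : ∀ A : Set V, A.ncard < m → ∃ X : Set V, X.Nonempty ∧ X ⊆ Aᶜ ∧ X.ncard ≤ m ∧
      (setNbhd G X \ A).ncard ≤ 2 * X.ncard := by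
    intro A hA
    obtain ⟨X, hXne, hXA, hXm, hX2⟩ := hcon A hA
    exact ⟨X, hXne, hXA, hXm, SetNbhd.setOf_adj_diff_eq G A X ▸ hX2⟩
  obtain ⟨B, hmB, hB2m, hB3⟩ := SetNbhd.exists_ncard_union_le_three_mul G hgrow ∅
    (by rw [Set.ncard_empty]; exact hm) (by simp [setNbhd])
  have := hexp B hmB
  omega
end

section
/- Let m_1 and m_2 be integers with 1 ≤ m_1 ≤ m_2 and let n be an integer with 2 ≤ n ≤ 2m_2 − 2. Then R(P_n, K_{m_1,m_2}) > (n−1) + m_1; in other words, P_n is not K_{m_1,m_2}-good. -/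
open SimpleGraph

/-!
Colour red the graph `K_{n-m₂, m₂}` plus `m₁ - 1` isolated vertices, at least `(n - 1) + m₁`
vertices in all. Its left side, of size `n - m₂ < ⌊n/2⌋`, is a vertex cover, whereas a vertex
cover of `P_n` meets each of the disjoint edges `{2i, 2i+1}`: there is no red `P_n`. The two sides
of `K_{n-m₂, m₂}` are not joined in blue, so a blue `K_{m₁,m₂}` either avoids one of them, and
then has at most `m₁ + m₂ - 1` vertices, or has a whole part among the `m₁ - 1` isolated
vertices.

Since `ramsey` is an `sInf` in `ℕ` (hence `0` when no `N` works), the Ramsey number must also be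
shown finite. The first vertex of a path that cannot be extended has all its neighbours on the
path, so removing such a path (fewer than `n` vertices in a `P_n`-free graph) and recursing
shows that a `P_n`-free graph on `(n - 1) s` vertices has an independent set of size `s`.
-/

open Fintype Finset

theorem Fintype.card_le_card_of_forall_mem {α V : Type*} [Fintype α] (f : α ↪ V) {S : Finset V}
    (h : ∀ a, f a ∈ S) : card α ≤ #S := by
  rw [← card_univ]
  exact card_le_card_of_injOn f (fun a _ => h a) f.injective.injOn

namespace SimpleGraph

variable {α β γ V W : Type*}

theorem containsCopy_iff_isContained {A : SimpleGraph α} {B : SimpleGraph β} :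
    ContainsCopy A B ↔ B ⊑ A := by
  rw [isContained_iff_exists_le_comap]
  rfl

theorem lt_ramsey_of_free [Fintype W] {G : SimpleGraph α} {H : SimpleGraph β} {N : ℕ}
    (hN : ∀ red : SimpleGraph (Fin N), G ⊑ red ∨ H ⊑ redᶜ) (R : SimpleGraph W)
    (hG : G.Free R) (hH : H.Free Rᶜ) : card W < ramsey G H := by
  have hne : {N : ℕ | ∀ red : SimpleGraph (Fin N),
      ContainsCopy red G ∨ ContainsCopy redᶜ H}.Nonempty :=
    ⟨N, by simpa only [Set.mem_ofPred_eq, containsCopy_iff_isContained] using hN⟩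
  by_contra! hle
  obtain ⟨e⟩ : Nonempty (Fin (ramsey G H) ↪ W) :=
    Function.Embedding.nonempty_of_card_le (by simpa using hle)
  have hcompl : (R.comap e)ᶜ ≤ Rᶜ.comap e := fun _ _ ⟨hvw, hnadj⟩ => ⟨e.injective.ne hvw, hnadj⟩
  rcases Nat.sInf_mem hne (R.comap e) with h | h <;> rw [containsCopy_iff_isContained] at h
  · exact hG (h.trans (Embedding.comap e R).isContained)
  · exact hH ((h.mono_right hcompl).trans (Embedding.comap e Rᶜ).isContained)

theorem pathGraph_isContained_pathGraph {n m : ℕ} (h : n ≤ m) : pathGraph n ⊑ pathGraph m :=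
  ⟨⟨⟨Fin.castLE h, fun hadj => by simpa [pathGraph_adj] using hadj⟩, Fin.castLE_injective h⟩⟩

theorem Walk.IsPath.length_add_one_lt_of_pathGraph_free {G : SimpleGraph V} {n : ℕ}
    (hG : (pathGraph n).Free G) {u v : V} {p : G.Walk u v} (hp : p.IsPath) :
    p.length + 1 < n := by
  by_contra! h
  exact hG ((pathGraph_isContained_pathGraph h).trans hp.isContained_pathGraph)

theorem exists_isPath_forall_adj_mem_support [Fintype V] [Nonempty V] (G : SimpleGraph V) :
    ∃ (u v : V) (p : G.Walk u v), p.IsPath ∧ ∀ w, G.Adj u w → w ∈ p.support := by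
  by_contra! h
  have hlong : ∀ k, ∃ (u v : V) (p : G.Walk u v), p.IsPath ∧ p.length = k := by
    intro k
    induction k with
    | zero =>
      obtain ⟨v⟩ := ‹Nonempty V›
      exact ⟨v, v, .nil, .nil, rfl⟩
    | succ k ih =>
      obtain ⟨u, v, p, hp, rfl⟩ := ih
      obtain ⟨w, huw, hw⟩ := h u v p hp
      exact ⟨w, v, .cons huw.symm p, hp.cons hw, rfl⟩
  obtain ⟨u, v, p, hp, hlen⟩ := hlong (card V)
  exact hp.length_lt.ne hlen

theorem exists_isNIndepSet_of_pathGraph_free {n : ℕ} (hn : 2 ≤ n) (s : ℕ) [Fintype V]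
    (G : SimpleGraph V) (hG : (pathGraph n).Free G) (hV : (n - 1) * s ≤ card V) :
    ∃ T : Finset V, G.IsNIndepSet s T := by
  classical
  induction s generalizing V with
  | zero => exact ⟨∅, by simp, rfl⟩
  | succ s ih =>
    have : Nonempty V := card_pos_iff.1 ((Nat.mul_pos (by omega) s.succ_pos).trans_le hV)
    obtain ⟨u, v, p, hp, hu⟩ := exists_isPath_forall_adj_mem_support G
    have hS : #p.support.toFinset ≤ n - 1 := by
      have hlen := hp.length_add_one_lt_of_pathGraph_free hG
      have hcard := p.support.toFinset_card_le
      rw [Walk.length_support] at hcard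
      omega
    set S := p.support.toFinset
    obtain ⟨T, hT⟩ := ih (G.induce (↑S)ᶜ) (fun h => hG (h.trans (Copy.induce G _).isContained))
      (by simp only [card_compl_set, coe_sort_coe, card_coe]; rw [Nat.mul_succ] at hV; omega)
    refine ⟨insert u (T.map (Function.Embedding.subtype _)), ?_, ?_⟩
    · rw [coe_insert, coe_map, ← isClique_compl]
      refine IsClique.insert ?_ fun w hw huw => ⟨huw, fun hadj => ?_⟩
      · rw [isClique_compl, Function.Embedding.coe_subtype, isIndepSet_iff,
          Subtype.val_injective.injOn.pairwise_image]
        exact hT.isIndepSet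
      · obtain ⟨⟨w, hwS⟩, -, rfl⟩ := hw
        exact hwS (List.mem_toFinset.2 (hu w hadj))
    · rw [card_insert_of_notMem, card_map, hT.card_eq]
      rintro hmem
      obtain ⟨w, -, hwu⟩ := mem_map.1 hmem
      exact w.2 (by simpa [← hwu, S] using p.start_mem_support)

theorem isContained_compl_of_pathGraph_free {n : ℕ} (hn : 2 ≤ n) [Fintype γ] (K : SimpleGraph γ)
    [Fintype V] (G : SimpleGraph V) (hG : (pathGraph n).Free G)
    (hV : (n - 1) * card γ ≤ card V) : K ⊑ Gᶜ := by
  obtain ⟨T, hT⟩ := exists_isNIndepSet_of_pathGraph_free hn (card γ) G hG hV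
  have hK : ¬ Gᶜ.CliqueFree (card γ) := ((isNClique_compl G).2 hT).not_cliqueFree
  rw [cliqueFree_iff_top_free, not_free] at hK
  exact (IsContained.of_le le_top).trans hK

theorem div_two_le_vertexCoverNum_pathGraph (n : ℕ) :
    ((n / 2 : ℕ) : ℕ∞) ≤ (pathGraph n).vertexCoverNum := by
  classical
  refine le_iInf₂ fun c hc => ?_
  let g : Fin (n / 2) → Fin n := fun i =>
    if (⟨2 * i, by omega⟩ : Fin n) ∈ c then ⟨2 * i, by omega⟩ else ⟨2 * i + 1, by omega⟩
  have hg : ∀ i, (g i : ℕ) / 2 = i := fun i => by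
    simp only [g, apply_ite Fin.val]; split_ifs <;> omega
  have hmaps : Set.MapsTo g Set.univ c := fun i _ => by
    have := @hc ⟨2 * i, by omega⟩ ⟨2 * i + 1, by omega⟩ (by simp [pathGraph_adj])
    simp only [g]; split_ifs with h <;> tauto
  have hinj : Set.InjOn g Set.univ := fun i _ j _ hij => Fin.ext (by rw [← hg i, ← hg j, hij])
  simpa using Set.encard_le_encard_of_injOn hmaps hinj

theorem pathGraph_free_of_isVertexCover {G : SimpleGraph V} {n : ℕ} {c : Finset V}
    (hc : G.IsVertexCover c) (hcn : #c < n / 2) : (pathGraph n).Free G := fun h => by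
  have := (div_two_le_vertexCoverNum_pathGraph n).trans
    (h.vertexCoverNum_le_vertexCoverNum.trans hc.vertexCoverNum_le)
  rw [Set.encard_coe_eq_coe_finsetCard, Nat.cast_le] at this
  omega

theorem card_le_of_completeBipartiteGraph_isContained_compl [Fintype α] [Fintype β] [Fintype V]
    [DecidableEq V] {G : SimpleGraph V} {L R : Finset V} (hLR : ∀ x ∈ L, ∀ y ∈ R, G.Adj x y)
    (h : completeBipartiteGraph α β ⊑ Gᶜ) :
    card α + card β ≤ #Lᶜ ∨ card α + card β ≤ #Rᶜ ∨
      card β ≤ #(L ∪ R)ᶜ ∨ card α ≤ #(L ∪ R)ᶜ := by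
  obtain ⟨f⟩ := h
  have hblue a b : ¬ G.Adj (f (.inl a)) (f (.inr b)) := (f.toHom.map_adj (by simp)).2
  have hLR' a b (ha : f (.inl a) ∈ L) : f (.inr b) ∉ R := fun hb => hblue a b (hLR _ ha _ hb)
  have hRL' a b (ha : f (.inl a) ∈ R) : f (.inr b) ∉ L := fun hb => hblue a b (hLR _ hb _ ha).symm
  by_cases hXL : ∃ a, f (.inl a) ∈ L <;> by_cases hXR : ∃ a, f (.inl a) ∈ R
  · obtain ⟨a, ha⟩ := hXL
    obtain ⟨a', ha'⟩ := hXR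
    refine .inr <| .inr <| .inl <| card_le_card_of_forall_mem (.trans .inr f.toEmbedding) ?_
    exact fun b => by simpa only [mem_compl, mem_union, not_or] using ⟨hRL' a' b ha', hLR' a b ha⟩
  · obtain ⟨a, ha⟩ := hXL
    push Not at hXR
    refine .inr <| .inl ?_
    rw [← Fintype.card_sum]
    refine card_le_card_of_forall_mem f.toEmbedding ?_
    rintro (a' | b)
    exacts [mem_compl.2 (hXR a'), mem_compl.2 (hLR' a b ha)]
  · obtain ⟨a, ha⟩ := hXR
    push Not at hXL
    refine .inl ?_
    rw [← Fintype.card_sum]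
    refine card_le_card_of_forall_mem f.toEmbedding ?_
    rintro (a' | b)
    exacts [mem_compl.2 (hXL a'), mem_compl.2 (hRL' a b ha)]
  · push Not at hXL hXR
    refine .inr <| .inr <| .inr <| card_le_card_of_forall_mem (.trans .inl f.toEmbedding) ?_
    exact fun a => by simpa only [mem_compl, mem_union, not_or] using ⟨hXL a, hXR a⟩

section

variable {ι κ μ : Type*}

theorem isVertexCover_completeBipartiteGraph_sum_bot [Fintype ι] :
    (completeBipartiteGraph ι κ ⊕g (⊥ : SimpleGraph μ)).IsVertexCover
      (univ.map (.trans .inl .inl) : Finset ((ι ⊕ κ) ⊕ μ)) := by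
  rintro ((i | k) | x) ((i' | k') | x') h <;> simp_all

theorem card_le_of_completeBipartiteGraph_isContained_compl_sum_bot [Fintype α] [Fintype β]
    [Fintype ι] [Fintype κ] [Fintype μ]
    (h : completeBipartiteGraph α β ⊑ (completeBipartiteGraph ι κ ⊕g (⊥ : SimpleGraph μ))ᶜ) :
    card α + card β ≤ card κ + card μ ∨ card α + card β ≤ card ι + card μ ∨
      card β ≤ card μ ∨ card α ≤ card μ := by
  classical
  let L : Finset ((ι ⊕ κ) ⊕ μ) := univ.map (.trans .inl .inl)
  let R : Finset ((ι ⊕ κ) ⊕ μ) := univ.map (.trans .inr .inl)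
  have hL : #Lᶜ = card κ + card μ := by
    simp only [card_compl, card_sum, card_map, card_univ, L]; omega
  have hR : #Rᶜ = card ι + card μ := by
    simp only [card_compl, card_sum, card_map, card_univ, R]; omega
  have hLR : #(L ∪ R)ᶜ = card μ := by
    rw [card_compl, card_union_of_disjoint (by simp [L, R, disjoint_iff_ne])]
    simp [L, R]
  rw [← hL, ← hR, ← hLR]
  exact card_le_of_completeBipartiteGraph_isContained_compl (by simp [L, R]) h

end

end SimpleGraph

/-- For `1 ≤ m₁ ≤ m₂` and `2 ≤ n ≤ 2m₂ - 2`, one has `R(P_n, K_{m₁,m₂}) > (n-1) + m₁`;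
that is, `P_n` is not `K_{m₁,m₂}`-good. -/
theorem stmt16 (m₁ m₂ n : ℕ) (hm₁ : 1 ≤ m₁) (hm : m₁ ≤ m₂)
    (hn₂ : 2 ≤ n) (hn : n ≤ 2 * m₂ - 2) :
    (n - 1) + m₁ < ramsey (pathGraph n) (completeBipartiteGraph (Fin m₁) (Fin m₂)) := by
  let R := completeBipartiteGraph (Fin (n - m₂)) (Fin m₂) ⊕g (⊥ : SimpleGraph (Fin (m₁ - 1)))
  have hN : ∀ red : SimpleGraph (Fin ((n - 1) * (m₁ + m₂))),
      pathGraph n ⊑ red ∨ completeBipartiteGraph (Fin m₁) (Fin m₂) ⊑ redᶜ := fun red =>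
    or_iff_not_imp_left.2 fun h => isContained_compl_of_pathGraph_free hn₂ _ red h (by simp)
  have hred : (pathGraph n).Free R :=
    pathGraph_free_of_isVertexCover isVertexCover_completeBipartiteGraph_sum_bot
      (by simp only [card_map, card_univ, Fintype.card_fin]; omega)
  have hblue : (completeBipartiteGraph (Fin m₁) (Fin m₂)).Free Rᶜ := fun h => by
    have := card_le_of_completeBipartiteGraph_isContained_compl_sum_bot h
    simp only [Fintype.card_fin] at this
    omega
  calc (n - 1) + m₁ ≤ card ((Fin (n - m₂) ⊕ Fin m₂) ⊕ Fin (m₁ - 1)) := by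
        simp only [card_sum, Fintype.card_fin]; omega
    _ < _ := lt_ramsey_of_free hN R hred hblue
end

section
/- Let m_1 and m_2 be integers with 1 ≤ m_1 ≤ m_2 and m_2 ≥ 2, and let n = 2m_2 − 2 and N = n + m_1 − 1 = 2m_2 + m_1 − 3. Consider the red-blue edge coloring of the complete graph K_N whose vertex set is partitioned into sets U_1, U_2 of sizes m_2 + m_1 − 1 and m_2 − 2 respectively, where all edges inside U_1 and inside U_2 are blue and all edges between U_1 and U_2 are red. This coloring contains no red path on n vertices and no blue copy of K_{m_1,m_2}. -/
open SimpleGraph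

/-- Let `1 ≤ m₁ ≤ m₂`, `m₂ ≥ 2` and `n = 2m₂ - 2`.  The red-blue coloring of the complete
graph on `N = n + m₁ - 1 = 2m₂ + m₁ - 3` vertices with two blue cliques `U₁, U₂` of sizes
`m₂ + m₁ - 1` and `m₂ - 2` and all edges between them red (so the red graph is the complete
bipartite graph between `U₁` and `U₂`) contains no red path on `n` vertices and no blue copy
of `K_{m₁,m₂}`. -/
theorem stmt17 (m₁ m₂ : ℕ) (hm₁ : 1 ≤ m₁) (hm : m₁ ≤ m₂) (hm₂ : 2 ≤ m₂) :
    ¬ ContainsCopy (completeBipartiteGraph (Fin (m₂ + m₁ - 1)) (Fin (m₂ - 2)))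
        (pathGraph (2 * m₂ - 2)) ∧
    ¬ ContainsCopy (completeBipartiteGraph (Fin (m₂ + m₁ - 1)) (Fin (m₂ - 2)))ᶜ
        (completeBipartiteGraph (Fin m₁) (Fin m₂)) := by
  constructor
  · rintro ⟨f, hf⟩
    have h : ∀ j : Fin (m₂ - 1), ∃ x : Fin (m₂ - 2), ∃ i : Fin (2 * m₂ - 2),
        (i.val = 2 * j.val ∨ i.val = 2 * j.val + 1) ∧ f i = Sum.inr x := by
      intro j
      have hj := j.isLt
      have ha : 2 * j.val < 2 * m₂ - 2 := by omega
      have hb : 2 * j.val + 1 < 2 * m₂ - 2 := by omega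
      have hadj : (pathGraph (2 * m₂ - 2)).Adj ⟨2 * j.val, ha⟩ ⟨2 * j.val + 1, hb⟩ := by
        rw [pathGraph_adj]; left; rfl
      have h2 := hf _ _ hadj
      simp only [completeBipartiteGraph_adj] at h2
      rcases h2 with ⟨_, h2⟩ | ⟨h1, _⟩
      · obtain ⟨x, hx⟩ := Sum.isRight_iff.mp h2
        exact ⟨x, ⟨2 * j.val + 1, hb⟩, Or.inr rfl, hx⟩
      · obtain ⟨x, hx⟩ := Sum.isRight_iff.mp h1
        exact ⟨x, ⟨2 * j.val, ha⟩, Or.inl rfl, hx⟩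
    choose g i hi hgi using h
    have hginj : Function.Injective g := by
      intro j j' hjj'
      have hfi : f (i j) = f (i j') := by rw [hgi, hgi, hjj']
      have hii : i j = i j' := f.injective hfi
      have h1 := hi j
      have h2 := hi j'
      rw [hii] at h1
      ext
      omega
    have hcard := Fintype.card_le_of_injective g hginj
    simp only [Fintype.card_fin] at hcard
    omega
  · rintro ⟨f, hf⟩
    have key : ∀ x : Fin m₁, ∀ y : Fin m₂,
        (f (Sum.inl x)).isLeft = (f (Sum.inr y)).isLeft := by
      intro x y
      have hadj : (completeBipartiteGraph (Fin m₁) (Fin m₂)).Adj (Sum.inl x) (Sum.inr y) := by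
        simp [completeBipartiteGraph_adj]
      obtain ⟨hne, hnadj⟩ := (compl_adj _ _ _).mp (hf _ _ hadj)
      simp only [completeBipartiteGraph_adj] at hnadj
      rcases h1 : f (Sum.inl x) with a | a <;> rcases h2 : f (Sum.inr y) with b | b <;>
        first
        | rfl
        | (exfalso; apply hnadj; rw [h1, h2]; simp)
    have key2 : ∀ v : Fin m₁ ⊕ Fin m₂, (f v).isLeft = (f (Sum.inl ⟨0, hm₁⟩)).isLeft := by
      rintro (x | y)
      · rw [key x ⟨0, by omega⟩, ← key ⟨0, hm₁⟩ ⟨0, by omega⟩]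
      · exact (key ⟨0, hm₁⟩ y).symm
    rcases hs : (f (Sum.inl ⟨0, hm₁⟩)).isLeft with _ | _
    · -- everything on the right side
      have h : ∀ v : Fin m₁ ⊕ Fin m₂, ∃ b : Fin (m₂ - 2), f v = Sum.inr b := by
        intro v
        have := key2 v
        rw [hs] at this
        exact Sum.isRight_iff.mp (by simp [Sum.not_isLeft] at this; exact this)
      choose g hg using h
      have hginj : Function.Injective g := by
        intro v v' hvv'
        apply f.injective
        rw [hg, hg, hvv']
      have hcard := Fintype.card_le_of_injective g hginj
      simp only [Fintype.card_sum, Fintype.card_fin] at hcard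
      omega
    · -- everything on the left side
      have h : ∀ v : Fin m₁ ⊕ Fin m₂, ∃ b : Fin (m₂ + m₁ - 1), f v = Sum.inl b := by
        intro v
        have := key2 v
        rw [hs] at this
        exact Sum.isLeft_iff.mp this
      choose g hg using h
      have hginj : Function.Injective g := by
        intro v v' hvv'
        apply f.injective
        rw [hg, hg, hvv']
      have hcard := Fintype.card_le_of_injective g hginj
      simp only [Fintype.card_sum, Fintype.card_fin] at hcard
      omega
end
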